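/- arXiv:1511.04926 — 5 statements merged into one kernel-verified Lean document; each statement's English description precedes it below -/
import Mathlib

section
/- Let n ≥ 1 and let μ : Fin n → (Fin n ⊕ ℕ) be a mutation. Then every μ-run c : ℕ → (Fin n → ℕ) admits indices h < k such that the tuple c h is equivalent to the tuple c k: there exists an injective flashback ι : ℕ → ℕ with c h i = ι (c k i) for every i : Fin n, and ι (c k i) = c k i whenever the name c k i lies in the range of c h. -/
/-- A μ-run: a sequence of tuples evolving according to the mutation μ. -/
def IsMuRun (n : ℕ) (μ : Fin n → (Fin n ⊕ ℕ)) (c : ℕ → Fin n → ℕ) : Prop :=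
  ∀ t : ℕ,
    (∀ (i j : Fin n), μ i = Sum.inl j → c (t + 1) i = c t j) ∧
    (∀ (i : Fin n) (l : ℕ), μ i = Sum.inr l →
      ∀ s ≤ t, ∀ j : Fin n, c (t + 1) i ≠ c s j) ∧
    (∀ (i i' : Fin n) (l l' : ℕ), μ i = Sum.inr l → μ i' = Sum.inr l' →
      (c (t + 1) i = c (t + 1) i' ↔ l = l'))

/-- Iterated backward copy-trace of the mutation. -/
def Fpow {n : ℕ} (μ : Fin n → (Fin n ⊕ ℕ)) : ℕ → Fin n → Option (Fin n)
  | 0, i => some i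
  | (m+1), i => match μ i with
    | Sum.inl j => Fpow μ m j
    | Sum.inr _ => none

lemma Fpow_trace {n : ℕ} {μ : Fin n → (Fin n ⊕ ℕ)} {c : ℕ → Fin n → ℕ}
    (hc : IsMuRun n μ c) :
    ∀ (m t : ℕ) (i j : Fin n), Fpow μ m i = some j → c (t + m) i = c t j := by
  intro m
  induction m with
  | zero =>
    intro t i j hF
    simp only [Fpow, Option.some.injEq] at hF
    subst hF; rfl
  | succ m ih =>
    intro t i j hF
    cases hμ : μ i with
    | inl j₁ =>
      have hF' : Fpow μ m j₁ = some j := by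
        rw [show Fpow μ (m+1) i = Fpow μ m j₁ by simp [Fpow, hμ]] at hF
        exact hF
      have h1 : c (t + m + 1) i = c (t + m) j₁ := (hc (t+m)).1 i j₁ hμ
      show c (t + m + 1) i = c t j
      rw [h1]; exact ih t j₁ j hF'
    | inr l =>
      rw [show Fpow μ (m+1) i = none by simp [Fpow, hμ]] at hF
      exact absurd hF (by simp)

lemma Fpow_fresh {n : ℕ} {μ : Fin n → (Fin n ⊕ ℕ)} {c : ℕ → Fin n → ℕ}
    (hc : IsMuRun n μ c) :
    ∀ (m t : ℕ) (i : Fin n), Fpow μ m i = none → ∀ j : Fin n, c (t + m) i ≠ c t j := by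
  intro m
  induction m with
  | zero =>
    intro t i hF
    simp [Fpow] at hF
  | succ m ih =>
    intro t i hF j
    cases hμ : μ i with
    | inl j₁ =>
      have hF' : Fpow μ m j₁ = none := by
        rw [show Fpow μ (m+1) i = Fpow μ m j₁ by simp [Fpow, hμ]] at hF
        exact hF
      have h1 : c (t + m + 1) i = c (t + m) j₁ := (hc (t+m)).1 i j₁ hμ
      show c (t + m + 1) i ≠ c t j
      rw [h1]; exact ih t j₁ hF' j
    | inr l =>
      exact (hc (t+m)).2.1 i l hμ t (Nat.le_add_right t m) j

lemma Fpow_add {n : ℕ} (μ : Fin n → (Fin n ⊕ ℕ)) :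
    ∀ (a b : ℕ) (i : Fin n), Fpow μ (a + b) i = (Fpow μ a i).bind (Fpow μ b) := by
  intro a
  induction a with
  | zero => intro b i; simp [Fpow]
  | succ a ih =>
    intro b i
    have harith : a + 1 + b = (a + b) + 1 := by omega
    rw [harith]
    cases hμ : μ i with
    | inl j =>
      have h1 : Fpow μ ((a+b)+1) i = Fpow μ (a+b) j := by simp [Fpow, hμ]
      have h2 : Fpow μ (a+1) i = Fpow μ a j := by simp [Fpow, hμ]
      rw [h1, h2, ih b j]
    | inr l =>
      have h1 : Fpow μ ((a+b)+1) i = none := by simp [Fpow, hμ]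
      have h2 : Fpow μ (a+1) i = none := by simp [Fpow, hμ]
      rw [h1, h2]; rfl

/-- Every μ-run admits indices `h < k` such that the tuple at `h` is equivalent
to the tuple at `k` via an injective flashback. -/
theorem mutation_flashback (n : ℕ) (hn : 1 ≤ n) (μ : Fin n → (Fin n ⊕ ℕ))
    (c : ℕ → Fin n → ℕ) (hc : IsMuRun n μ c) :
    ∃ h k : ℕ, h < k ∧ ∃ ι : ℕ → ℕ, Function.Injective ι ∧
      (∀ i : Fin n, c h i = ι (c k i)) ∧
      (∀ i : Fin n, c k i ∈ Set.range (c h) → ι (c k i) = c k i) := by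
  classical
  -- find a < b with Fpow μ a = Fpow μ b
  obtain ⟨a₀, b₀, hab₀, hF₀⟩ :=
    Finite.exists_ne_map_eq_of_infinite (fun m : ℕ => Fpow μ m)
  obtain ⟨a, b, hab, hF⟩ : ∃ a b : ℕ, a < b ∧ Fpow μ a = Fpow μ b := by
    rcases hab₀.lt_or_gt with hlt | hlt
    · exact ⟨a₀, b₀, hlt, hF₀⟩
    · exact ⟨b₀, a₀, hlt, hF₀.symm⟩
  -- shift lemma
  have hshift : ∀ s : ℕ, Fpow μ (s + a) = Fpow μ (s + b) := by
    intro s; funext i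
    rw [Fpow_add, Fpow_add, hF]
  set p : ℕ := b - a with hp
  have hp1 : 1 ≤ p := by omega
  -- periodicity beyond a
  have hperiod : ∀ s d : ℕ, a ≤ s → Fpow μ (s + d * p) = Fpow μ s := by
    intro s d hs
    induction d with
    | zero => simp
    | succ d ihd =>
      have e1 : (d+1) * p = d * p + p := by ring
      have h1 : s + (d+1) * p = (s + d * p - a) + b := by omega
      have h2 : s + d * p = (s + d * p - a) + a := by omega
      rw [h1, ← hshift, ← h2, ihd]
  set m : ℕ := (a + 1) * p with hm
  have hm1 : 1 ≤ m := by
    have : a + 1 ≤ (a+1)*p := Nat.le_mul_of_pos_right _ (by omega)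
    omega
  have hma : a ≤ m := by
    have : a + 1 ≤ (a+1)*p := Nat.le_mul_of_pos_right _ (by omega)
    omega
  have hidem : Fpow μ (m + m) = Fpow μ m := by
    have := hperiod m (a+1) hma
    rw [hm] at this ⊢
    exact this
  have hmult : ∀ q : ℕ, 1 ≤ q → Fpow μ (q * m) = Fpow μ m := by
    intro q hq
    obtain ⟨d, hd⟩ : ∃ d, q = d + 1 := ⟨q - 1, by omega⟩
    have h1 : q * m = m + (d * (a+1)) * p := by rw [hd, hm]; ring
    rw [h1]; exact hperiod m (d*(a+1)) hma
  -- pigeonhole on equality patterns at times (j+1)*m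
  obtain ⟨x₀, y₀, hxy₀, hg₀⟩ :=
    Finite.exists_ne_map_eq_of_infinite
      (fun j : ℕ => fun i i' : Fin n => decide (c ((j+1)*m) i = c ((j+1)*m) i'))
  obtain ⟨x, y, hxy, hg⟩ : ∃ x y : ℕ, x < y ∧
      (fun i i' : Fin n => decide (c ((x+1)*m) i = c ((x+1)*m) i')) =
      (fun i i' : Fin n => decide (c ((y+1)*m) i = c ((y+1)*m) i')) := by
    rcases hxy₀.lt_or_gt with hlt | hlt
    · exact ⟨x₀, y₀, hlt, hg₀⟩
    · exact ⟨y₀, x₀, hlt, hg₀.symm⟩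
  set h : ℕ := (x+1)*m with hh
  set k : ℕ := (y+1)*m with hk
  have hpat : ∀ i i' : Fin n, c h i = c h i' ↔ c k i = c k i' := by
    intro i i'
    have := congrFun (congrFun hg i) i'
    simpa using this
  have hhk : k = h + (y - x) * m := by
    rw [hh, hk]
    have : (y+1) = (x+1) + (y-x) := by omega
    rw [this, Nat.add_mul]
  have hMm : Fpow μ ((y-x)*m) = Fpow μ m := hmult (y-x) (by omega)
  have hhm : m ≤ h := by
    rw [hh]; exact Nat.le_mul_of_pos_left m (by omega)
  -- Fact 1: if the trace survives m steps, the value is unchanged from h to k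
  have fact1 : ∀ (i j0 : Fin n), Fpow μ m i = some j0 → c k i = c h i := by
    intro i j0 he
    have heM : Fpow μ ((y-x)*m) i = some j0 := by rw [hMm]; exact he
    have hck : c k i = c h j0 := by
      rw [hhk]; exact Fpow_trace hc ((y-x)*m) h i j0 heM
    have hchi : c h i = c (h - m) j0 := by
      have := Fpow_trace hc m (h-m) i j0 he
      rwa [show h - m + m = h by omega] at this
    have hej0 : Fpow μ m j0 = some j0 := by
      have h1 : Fpow μ (m + m) i = (Fpow μ m i).bind (Fpow μ m) := Fpow_add μ m m i
      rw [hidem, he] at h1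
      simpa using h1.symm
    have hchj0 : c h j0 = c (h - m) j0 := by
      have := Fpow_trace hc m (h-m) j0 j0 hej0
      rwa [show h - m + m = h by omega] at this
    rw [hck, hchj0, ← hchi]
  -- Fact 2: if the trace dies, the value at k is fresh w.r.t. time h
  have fact2 : ∀ (i : Fin n), Fpow μ m i = none → ∀ j : Fin n, c k i ≠ c h j := by
    intro i he j
    have heM : Fpow μ ((y-x)*m) i = none := by rw [hMm]; exact he
    rw [hhk]
    exact Fpow_fresh hc ((y-x)*m) h i heM j
  -- build the flashback
  set Nbig : ℕ := (Finset.univ.sup fun i : Fin n => c h i) + 1 with hNbig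
  have hlt : ∀ i : Fin n, c h i < Nbig := fun i =>
    Nat.lt_succ_of_le (Finset.le_sup (Finset.mem_univ i))
  refine ⟨h, k, ?_, fun z => if hz : ∃ i : Fin n, c k i = z then c h hz.choose else z + Nbig,
    ?_, ?_, ?_⟩
  · rw [hh, hk]
    exact Nat.mul_lt_mul_of_lt_of_le (by omega) le_rfl (by omega)
  · -- injectivity
    intro z w hzw
    by_cases hz : ∃ i : Fin n, c k i = z <;> by_cases hw : ∃ i : Fin n, c k i = w
    · simp only [dif_pos hz, dif_pos hw] at hzw
      have := (hpat _ _).mp hzw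
      rw [hz.choose_spec, hw.choose_spec] at this
      exact this
    · simp only [dif_pos hz, dif_neg hw] at hzw
      have := hlt hz.choose
      omega
    · simp only [dif_neg hz, dif_pos hw] at hzw
      have := hlt hw.choose
      omega
    · simp only [dif_neg hz, dif_neg hw] at hzw
      omega
  · -- c h i = ι (c k i)
    intro i
    have hz : ∃ i' : Fin n, c k i' = c k i := ⟨i, rfl⟩
    simp only [dif_pos hz]
    exact ((hpat _ _).mpr hz.choose_spec).symm
  · -- fixed points
    rintro i ⟨i'', hi''⟩
    have hz : ∃ i' : Fin n, c k i' = c k i := ⟨i, rfl⟩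
    simp only [dif_pos hz]
    have hkey : c h hz.choose = c h i := (hpat _ _).mpr hz.choose_spec
    rw [hkey]
    cases he : Fpow μ m i with
    | none => exact absurd hi''.symm (fact2 i he i'')
    | some j0 => exact (fact1 i j0 he).symm
end

section
/- The sequence operation on pairs of lams is monotone with respect to ⋐_κ: if κ : ℕ → ℕ is injective, 𝓛2 is nonempty, ⟨𝓛1, 𝓛1'⟩ ⋐_κ ⟨𝓜1, 𝓜1'⟩ and ⟨𝓛2, 𝓛2'⟩ ⋐_κ ⟨𝓜2, 𝓜2'⟩, then (⟨𝓛1, 𝓛1'⟩ ⨟ ⟨𝓛2, 𝓛2'⟩) ⋐_κ (⟨𝓜1, 𝓜1'⟩ ⨟ ⟨𝓜2, 𝓜2'⟩). -/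
/-- A dependency: a pair of cog names with an await/get flag. -/
abbrev Dep := ℕ × ℕ × Bool
/-- A relation on cog names: a set of dependencies. -/
abbrev DepRel := Set Dep
/-- A lam: a set of relations. -/
abbrev Lam := Set DepRel

/-- Renaming of names in a relation. -/
def mapRel (κ : ℕ → ℕ) (L : DepRel) : DepRel :=
  {d | ∃ c c' b, (c, c', b) ∈ L ∧ d = (κ c, κ c', b)}

/-- Renaming of names in a lam. -/
def mapLam (κ : ℕ → ℕ) (𝓛 : Lam) : Lam :=
  {M | ∃ L ∈ 𝓛, M = mapRel κ L}

/-- `𝓛 ⋐_κ 𝓛'`: every relation of `𝓛`, renamed by `κ`, is included in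
some relation of `𝓛'`. -/
def LamLeK (κ : ℕ → ℕ) (𝓛 𝓛' : Lam) : Prop :=
  ∀ L ∈ 𝓛, ∃ L' ∈ 𝓛', mapRel κ L ⊆ L'

/-- `𝓛 ⋐ 𝓛'`: `𝓛 ⋐_κ 𝓛'` for some injective `κ`. -/
def LamLe (𝓛 𝓛' : Lam) : Prop :=
  ∃ κ : ℕ → ℕ, Function.Injective κ ∧ LamLeK κ 𝓛 𝓛'

/-- Parallel composition of lams: `𝓛 ∥ 𝓛' = {L ∪ L' | L ∈ 𝓛, L' ∈ 𝓛'}`. -/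
def parLam (𝓛 𝓛' : Lam) : Lam :=
  {M | ∃ L ∈ 𝓛, ∃ L' ∈ 𝓛', M = L ∪ L'}

/-- `⋐_κ` on pairs of lams: componentwise with the same `κ`. -/
def PairLeK (κ : ℕ → ℕ) (p q : Lam × Lam) : Prop :=
  LamLeK κ p.1 q.1 ∧ LamLeK κ p.2 q.2

open Classical in
/-- Sequence of pairs of lams. -/
noncomputable def seqPair (p q : Lam × Lam) : Lam × Lam :=
  if q.1 = ({∅} : Lam) then (p.1, parLam p.2 q.2)
  else (p.1 ∪ parLam q.1 p.2, parLam p.2 q.2)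


lemma mapRel_union (κ : ℕ → ℕ) (L L' : DepRel) :
    mapRel κ (L ∪ L') = mapRel κ L ∪ mapRel κ L' := by
  ext d
  constructor
  · rintro ⟨c, c', b, (h | h), rfl⟩
    · exact Or.inl ⟨c, c', b, h, rfl⟩
    · exact Or.inr ⟨c, c', b, h, rfl⟩
  · rintro (⟨c, c', b, h, rfl⟩ | ⟨c, c', b, h, rfl⟩)
    · exact ⟨c, c', b, Or.inl h, rfl⟩
    · exact ⟨c, c', b, Or.inr h, rfl⟩

lemma mapRel_empty_of_sub (κ : ℕ → ℕ) (L : DepRel) (h : mapRel κ L ⊆ ∅) : L = ∅ := by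
  ext d
  simp only [Set.mem_empty_iff_false, iff_false]
  intro hd
  obtain ⟨c, c', b⟩ := d
  exact h ⟨c, c', b, hd, rfl⟩

lemma parLam_mono (κ : ℕ → ℕ) {A B C D : Lam} (h1 : LamLeK κ A C) (h2 : LamLeK κ B D) :
    LamLeK κ (parLam A B) (parLam C D) := by
  rintro M ⟨L, hL, L', hL', rfl⟩
  obtain ⟨M1, hM1, hs1⟩ := h1 L hL
  obtain ⟨M2, hM2, hs2⟩ := h2 L' hL'
  refine ⟨M1 ∪ M2, ⟨M1, hM1, M2, hM2, rfl⟩, ?_⟩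
  rw [mapRel_union]
  exact Set.union_subset_union hs1 hs2

/-- The sequence operation on pairs of lams is monotone with respect to `⋐_κ`. -/
theorem seqPair_monotone (κ : ℕ → ℕ) (hκ : Function.Injective κ)
    (p1 p2 q1 q2 : Lam × Lam) (hne : p2.1.Nonempty)
    (h1 : PairLeK κ p1 q1) (h2 : PairLeK κ p2 q2) :
    PairLeK κ (seqPair p1 p2) (seqPair q1 q2) := by
  obtain ⟨h11, h12⟩ := h1
  obtain ⟨h21, h22⟩ := h2
  have hpar : LamLeK κ (parLam p1.2 p2.2) (parLam q1.2 q2.2) := parLam_mono κ h12 h22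
  by_cases hq : q2.1 = ({∅} : Lam)
  · -- then p2.1 = {∅} as well
    have hp : p2.1 = ({∅} : Lam) := by
      apply Set.eq_singleton_iff_nonempty_unique_mem.2
      refine ⟨hne, fun L hL => ?_⟩
      obtain ⟨L', hL', hs⟩ := h21 L hL
      rw [hq] at hL'
      rw [Set.mem_singleton_iff] at hL'
      subst hL'
      exact mapRel_empty_of_sub κ L hs
    simp only [seqPair, hp, hq, if_true]
    exact ⟨h11, hpar⟩
  · by_cases hp : p2.1 = ({∅} : Lam)
    · simp only [seqPair, hp, hq, if_true, if_false]
      refine ⟨fun L hL => ?_, hpar⟩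
      obtain ⟨L', hL', hs⟩ := h11 L hL
      exact ⟨L', Or.inl hL', hs⟩
    · simp only [seqPair, hp, hq, if_false]
      refine ⟨?_, hpar⟩
      rintro L (hL | ⟨L2, hL2, L1', hL1', rfl⟩)
      · obtain ⟨L', hL', hs⟩ := h11 L hL
        exact ⟨L', Or.inl hL', hs⟩
      · obtain ⟨M2, hM2, hs2⟩ := h21 L2 hL2
        obtain ⟨M1, hM1, hs1⟩ := h12 L1' hL1'
        refine ⟨M2 ∪ M1, Or.inr ⟨M2, hM2, M1, hM1, rfl⟩, ?_⟩
        rw [mapRel_union]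
        exact Set.union_subset_union hs2 hs1
end

section
/- Injective renaming of names preserves the pre-order on lams: if 𝓛 ⋐ 𝓛', only finitely many names occur in 𝓛 (i.e. the set of names c appearing in some dependency of some relation of 𝓛 is finite), and σ : ℕ → ℕ is injective, then σ·𝓛 ⋐ σ·𝓛'. -/
/-- The set of names occurring in a lam. -/
def namesOf (𝓛 : Lam) : Set ℕ :=
  {c | ∃ L ∈ 𝓛, ∃ (c' : ℕ) (b : Bool), (c, c', b) ∈ L ∨ (c', c, b) ∈ L}

/-- Any function injective on a finite set of naturals extends to an
injective function on all of `ℕ`. -/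
lemma exists_inj_extend (S : Set ℕ) (hS : S.Finite) (g : ℕ → ℕ)
    (hg : Set.InjOn g S) :
    ∃ κ : ℕ → ℕ, Function.Injective κ ∧ ∀ x ∈ S, κ x = g x := by
  classical
  have hT : (g '' S).Finite := hS.image g
  have hSi : (Sᶜ : Set ℕ).Infinite := hS.infinite_compl
  have hTi : ((g '' S)ᶜ : Set ℕ).Infinite := hT.infinite_compl
  haveI : Infinite ↥(Sᶜ) := hSi.to_subtype
  haveI : Infinite ↥((g '' S)ᶜ) := hTi.to_subtype
  haveI : Denumerable ↥(Sᶜ) := Nat.Subtype.denumerable _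
  haveI : Denumerable ↥((g '' S)ᶜ) := Nat.Subtype.denumerable _
  let eS : S ≃ (g '' S) := Equiv.Set.imageOfInjOn g S hg
  let eC : ↥(Sᶜ) ≃ ↥((g '' S)ᶜ) :=
    (Denumerable.eqv _).trans (Denumerable.eqv _).symm
  let e : ℕ ≃ ℕ := (Equiv.Set.sumCompl S).symm.trans
    ((eS.sumCongr eC).trans (Equiv.Set.sumCompl (g '' S)))
  refine ⟨e, e.injective, fun x hx => ?_⟩
  have h1 : (Equiv.Set.sumCompl S).symm x = Sum.inl ⟨x, hx⟩ :=
    Equiv.Set.sumCompl_symm_apply_of_mem hx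
  simp [e, h1, eS, Equiv.Set.imageOfInjOn]

/-- Injective renaming of names preserves the pre-order `⋐` on lams with
finitely many names. -/
theorem lamLe_rename (𝓛 𝓛' : Lam) (h : LamLe 𝓛 𝓛')
    (hfin : (namesOf 𝓛).Finite) (σ : ℕ → ℕ) (hσ : Function.Injective σ) :
    LamLe (mapLam σ 𝓛) (mapLam σ 𝓛') := by
  classical
  obtain ⟨κ, hκinj, hκ⟩ := h
  set S : Set ℕ := σ '' namesOf 𝓛 with hSdef
  have hSfin : S.Finite := hfin.image σ
  have hlinv : Function.LeftInverse (Function.invFun σ) σ :=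
    Function.leftInverse_invFun hσ
  set g : ℕ → ℕ := σ ∘ κ ∘ Function.invFun σ with hgdef
  have hginj : Set.InjOn g S := by
    rintro x ⟨c, hc, rfl⟩ y ⟨c', hc', rfl⟩ hxy
    simp only [g, Function.comp_apply, hlinv c, hlinv c'] at hxy
    exact congrArg σ (hκinj (hσ hxy))
  obtain ⟨κ', hκ'inj, hκ'⟩ := exists_inj_extend S hSfin g hginj
  have key : ∀ c ∈ namesOf 𝓛, κ' (σ c) = σ (κ c) := by
    intro c hc
    rw [hκ' (σ c) ⟨c, hc, rfl⟩]
    simp [g, hlinv c]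
  refine ⟨κ', hκ'inj, ?_⟩
  rintro M ⟨L, hL, rfl⟩
  obtain ⟨L', hL', hsub⟩ := hκ L hL
  refine ⟨mapRel σ L', ⟨L', hL', rfl⟩, ?_⟩
  rintro d ⟨x, x', b, ⟨c, c', b', hcc', heq⟩, rfl⟩
  obtain ⟨hx, hx', hb⟩ : x = σ c ∧ x' = σ c' ∧ b = b' := by
    simpa [Prod.ext_iff] using heq
  subst hx hx' hb
  have hcmem : c ∈ namesOf 𝓛 := ⟨L, hL, c', b, Or.inl hcc'⟩
  have hcmem' : c' ∈ namesOf 𝓛 := ⟨L, hL, c, b, Or.inr hcc'⟩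
  have hmem : (κ c, κ c', b) ∈ L' := hsub ⟨c, c', b, hcc', rfl⟩
  exact ⟨κ c, κ c', b, hmem, by rw [key c hcmem, key c' hcmem']⟩
end

section
/- The get-closure commutes with injective renamings of names: for every injective κ : ℕ → ℕ and every set A of dependencies, (κ·A)^get = κ·(A^get). Consequently, circularities are preserved and reflected by injective renamings: A contains a circularity if and only if κ·A contains a circularity. -/
/-- Membership in the get-closure of a set of dependencies. -/
inductive InGetClosure (A : DepRel) : Dep → Prop
  | base {d : Dep} : d ∈ A → InGetClosure A d
  | step {c c' c'' : ℕ} {b : Bool} :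
      InGetClosure A (c, c', false) → InGetClosure A (c', c'', b) →
      InGetClosure A (c, c'', false)

/-- The get-closure `A^get` of a set of dependencies. -/
def getClosure (A : DepRel) : DepRel := {d | InGetClosure A d}

/-- A set of dependencies contains a circularity if its get-closure has a
pair `(c, c)`. -/
def HasCircularity (A : DepRel) : Prop := ∃ c b, (c, c, b) ∈ getClosure A

lemma mapRel_getClosure_sub (κ : ℕ → ℕ) (A : DepRel) :
    mapRel κ (getClosure A) ⊆ getClosure (mapRel κ A) := by
  have key : ∀ d, InGetClosure A d →
      InGetClosure (mapRel κ A) (κ d.1, κ d.2.1, d.2.2) := by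
    intro d hd
    induction hd with
    | @base d hd => exact InGetClosure.base ⟨_, _, _, hd, rfl⟩
    | @step c c' c'' b h1 h2 ih1 ih2 => exact InGetClosure.step ih1 ih2
  rintro d ⟨c, c', b, hd, rfl⟩
  exact key (c, c', b) hd

lemma getClosure_mapRel_sub (κ : ℕ → ℕ) (hκ : Function.Injective κ) (A : DepRel) :
    getClosure (mapRel κ A) ⊆ mapRel κ (getClosure A) := by
  intro d hd
  induction hd with
  | @base d hd =>
    obtain ⟨c, c', b, h, rfl⟩ := hd
    exact ⟨c, c', b, InGetClosure.base h, rfl⟩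
  | @step c c' c'' b h1 h2 ih1 ih2 =>
    obtain ⟨x, y, b1, hx, he1⟩ := ih1
    obtain ⟨u, v, b2, hu, he2⟩ := ih2
    simp only [Prod.mk.injEq] at he1 he2
    obtain ⟨rfl, rfl, rfl⟩ := he1
    obtain ⟨h3, rfl, rfl⟩ := he2
    have := hκ h3
    subst this
    exact ⟨x, v, false, InGetClosure.step hx hu, rfl⟩

/-- The get-closure commutes with injective renaming, hence circularities are
preserved and reflected by injective renamings. -/
theorem getClosure_mapRel (κ : ℕ → ℕ) (hκ : Function.Injective κ) (A : DepRel) :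
    getClosure (mapRel κ A) = mapRel κ (getClosure A) ∧
    (HasCircularity A ↔ HasCircularity (mapRel κ A)) := by
  have heq : getClosure (mapRel κ A) = mapRel κ (getClosure A) :=
    Set.Subset.antisymm (getClosure_mapRel_sub κ hκ A) (mapRel_getClosure_sub κ A)
  refine ⟨heq, ?_, ?_⟩
  · rintro ⟨c, b, hc⟩
    exact ⟨κ c, b, heq ▸ ⟨c, c, b, hc, rfl⟩⟩
  · rintro ⟨c, b, hc⟩
    rw [heq] at hc
    obtain ⟨x, y, b', h, he⟩ := hc
    simp only [Prod.mk.injEq] at he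
    obtain ⟨h1, h2, rfl⟩ := he
    have : x = y := hκ (h1.symm.trans h2)
    subst this
    exact ⟨x, _, h⟩
end

section
/- The pre-order ⋐ on lams preserves circularities: if 𝓛 ⋐ 𝓛' and some relation L ∈ 𝓛 contains a circularity (i.e. (c, c, b) ∈ L^get for some name c and flag b), then some relation L' ∈ 𝓛' contains a circularity. -/
lemma getClosure_mono {A B : DepRel} (hAB : A ⊆ B) {d : Dep}
    (hd : InGetClosure A d) : InGetClosure B d := by
  induction hd with
  | base h => exact InGetClosure.base (hAB h)
  | step _ _ ih1 ih2 => exact InGetClosure.step ih1 ih2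

lemma getClosure_map (κ : ℕ → ℕ) {A : DepRel} {c c' : ℕ} {b : Bool}
    (hd : InGetClosure A (c, c', b)) :
    InGetClosure (mapRel κ A) (κ c, κ c', b) := by
  generalize hcc : (c, c', b) = d at hd
  induction hd generalizing c c' b with
  | base h =>
    subst hcc
    exact InGetClosure.base ⟨c, c', b, h, rfl⟩
  | @step x y z bb h1 h2 ih1 ih2 =>
    cases hcc
    exact InGetClosure.step (ih1 rfl) (ih2 rfl)

/-- The pre-order `⋐` on lams preserves circularities. -/
theorem lamLe_preserves_circularity (𝓛 𝓛' : Lam) (h : LamLe 𝓛 𝓛')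
    (hcirc : ∃ L ∈ 𝓛, HasCircularity L) :
    ∃ L' ∈ 𝓛', HasCircularity L' := by
  obtain ⟨κ, hκ, hle⟩ := h
  obtain ⟨L, hL, c, b, hc⟩ := hcirc
  obtain ⟨L', hL', hsub⟩ := hle L hL
  exact ⟨L', hL', κ c, b, getClosure_mono hsub (getClosure_map κ hc)⟩
end
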